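/- Let p be an odd prime and let S_ξ, S_{ξ'} be diagonal matrices in Q = T_{(p^m)} with S_ξ^p and S_{ξ'}^p scalar multiples of the identity by p-th roots of unity. Then the map φ₁ defined by φ₁(S_ξ) = R(ξ), where R(ξ)(q) = ω^{ϑ_{1,0} + ϑ_{2,0}/p + ϑ_{1,1} q} (i.e., ω^{ϑ_{1,0}+ϑ_{1,1}q}·(p-th root of ω)^{ϑ_{2,0}}), is multiplicative: φ₁(S_ξ S_{ξ'}) = φ₁(S_ξ) φ₁(S_{ξ'}). -/

import Mathlib

noncomputable section

open Matrix

/-- The generalised Pauli shift operator `X` on `ℂ^p`, with `X |q⟩ = |q+1⟩`. -/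
def Xmat (p : ℕ) [NeZero p] : Matrix (ZMod p) (ZMod p) ℂ :=
  Matrix.of fun i j => if i = j + 1 then 1 else 0

/-- The primitive `p`-th root of unity `ω = exp(2πi/p)`. -/
def ωp (p : ℕ) : ℂ := Complex.exp (2 * Real.pi * Complex.I / p)

/-- The phase function `ξ(q) = ω^{Σ_a ϑ_{1,a} q^a} · (ω^{1/p})^{ϑ_{2,0}}`, i.e. the expansion
of a diagonal element whose `p`-th power is a scalar `p`-th root of unity. -/
def xiOf (p : ℕ) [NeZero p] (ϑ1 : ZMod p → ZMod p) (ϑ20 : ZMod p) (q : ZMod p) : ℂ :=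
  Complex.exp (2 * Real.pi * Complex.I / p *
      ∑ a : ZMod p, ((ϑ1 a).val : ℂ) * ((q.val : ℂ) ^ a.val)) *
    Complex.exp (2 * Real.pi * Complex.I / (p ^ 2) * ((ϑ20.val : ℂ)))

/-- The map `R`: `R(ξ)(q) = ω^{ϑ_{1,0} + ϑ_{1,1} q} · (ω^{1/p})^{ϑ_{2,0}}`, so that
`φ₁(S_ξ) = S_{R(ξ)}`. -/
def Rof (p : ℕ) [NeZero p] (ϑ1 : ZMod p → ZMod p) (ϑ20 : ZMod p) (q : ZMod p) : ℂ :=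
  Complex.exp (2 * Real.pi * Complex.I / p *
      (((ϑ1 0).val : ℂ) + ((ϑ1 1).val : ℂ) * (q.val : ℂ))) *
    Complex.exp (2 * Real.pi * Complex.I / (p ^ 2) * ((ϑ20.val : ℂ)))

/- ### Auxiliary lemmas -/

/-- Equality of exponentials of `2πi/p²` times integers is exactly congruence mod `p²`. -/
lemma exp_eq_exp_int (p : ℕ) [NeZero p] (M N : ℤ) :
    Complex.exp (2 * Real.pi * Complex.I / (p^2) * M) =
      Complex.exp (2 * Real.pi * Complex.I / (p^2) * N) ↔ ((p:ℤ)^2) ∣ (M - N) := by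
  have hp2 : ((p:ℂ)^2) ≠ 0 := pow_ne_zero _ (Nat.cast_ne_zero.mpr (NeZero.ne p))
  rw [Complex.exp_eq_exp_iff_exists_int]
  constructor
  · rintro ⟨n, hn⟩
    refine ⟨n, ?_⟩
    have h2 : (M : ℂ) = (N : ℂ) + (n : ℂ) * (p:ℂ)^2 := by
      field_simp at hn
      rw [div_add' _ _ _ hp2, div_left_inj' hp2] at hn
      exact hn
    have h3 : (M : ℤ) = N + n * (p:ℤ)^2 := by exact_mod_cast h2
    linarith
  · rintro ⟨k, hk⟩
    refine ⟨k, ?_⟩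
    have h2 : (M : ℂ) = N + (k:ℂ) * ((p:ℂ))^2 := by
      exact_mod_cast congrArg (Int.cast : ℤ → ℂ) (by linarith : M = N + k * (p:ℤ)^2)
    rw [h2]; field_simp
    rw [add_div, mul_div_cancel_left₀ _ hp2]

/-- The integer exponent sum of the phase function. -/
def Sint (p : ℕ) [NeZero p] (ϑ1 : ZMod p → ZMod p) (q : ZMod p) : ℤ :=
  ∑ a : ZMod p, ((ϑ1 a).val : ℤ) * ((q.val : ℤ)) ^ a.val

lemma xiOf_eq (p : ℕ) [NeZero p] (ϑ1 : ZMod p → ZMod p) (ϑ20 : ZMod p) (q : ZMod p) :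
    xiOf p ϑ1 ϑ20 q =
      Complex.exp (2 * Real.pi * Complex.I / (p^2) *
        ((p * Sint p ϑ1 q + (ϑ20.val : ℤ) : ℤ) : ℂ)) := by
  have hp : ((p:ℂ)) ≠ 0 := Nat.cast_ne_zero.mpr (NeZero.ne p)
  rw [xiOf, ← Complex.exp_add]
  congr 1
  have : ((Sint p ϑ1 q : ℤ) : ℂ) = ∑ a : ZMod p, ((ϑ1 a).val : ℂ) * ((q.val : ℂ) ^ a.val) := by
    rw [Sint]; push_cast; ring
  push_cast
  rw [this]
  field_simp

/-- The integer exponent of the map `R`. -/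
def Rint (p : ℕ) [NeZero p] (ϑ1 : ZMod p → ZMod p) (ϑ20 : ZMod p) (q : ZMod p) : ℤ :=
  p * (((ϑ1 0).val : ℤ) + ((ϑ1 1).val : ℤ) * (q.val : ℤ)) + (ϑ20.val : ℤ)

lemma Rof_eq (p : ℕ) [NeZero p] (ϑ1 : ZMod p → ZMod p) (ϑ20 : ZMod p) (q : ZMod p) :
    Rof p ϑ1 ϑ20 q =
      Complex.exp (2 * Real.pi * Complex.I / (p^2) * ((Rint p ϑ1 ϑ20 q : ℤ) : ℂ)) := by
  have hp : ((p:ℂ)) ≠ 0 := Nat.cast_ne_zero.mpr (NeZero.ne p)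
  rw [Rof, ← Complex.exp_add, Rint]
  congr 1
  push_cast
  field_simp

/-- A polynomial function of degree `< p` on `ZMod p` which is constant has constant
coefficients in degrees `0` and `1`. -/
lemma coeffs_eq (p : ℕ) [NeZero p] (hp : p.Prime) (δ : ZMod p → ZMod p) (e : ZMod p)
    (h : ∀ q : ZMod p, ∑ a : ZMod p, δ a * q ^ a.val = e) :
    δ 0 = e ∧ δ 1 = 0 := by
  haveI : Fact p.Prime := ⟨hp⟩
  haveI : Fact (1 < p) := ⟨hp.one_lt⟩
  classical
  set P : Polynomial (ZMod p) :=
    (∑ a : ZMod p, Polynomial.C (δ a) * Polynomial.X ^ a.val) - Polynomial.C e with hPdef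
  have heval : ∀ x : ZMod p, P.eval x = 0 := by
    intro x
    simp only [hPdef, Polynomial.eval_sub, Polynomial.eval_finset_sum, Polynomial.eval_mul,
      Polynomial.eval_C, Polynomial.eval_pow, Polynomial.eval_X]
    rw [h x, sub_self]
  have hdeg : P.natDegree < Fintype.card (ZMod p) := by
    rw [ZMod.card]
    refine lt_of_le_of_lt (Polynomial.natDegree_sub_le _ _) ?_
    have h1 : (∑ a : ZMod p, Polynomial.C (δ a) * Polynomial.X ^ a.val).natDegree ≤ p - 1 := by
      refine Polynomial.natDegree_sum_le_of_forall_le _ _ (fun a _ => ?_)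
      refine le_trans (Polynomial.natDegree_C_mul_X_pow_le _ _) ?_
      exact Nat.le_sub_one_of_lt (ZMod.val_lt a)
    have h2 : (Polynomial.C e).natDegree = 0 := Polynomial.natDegree_C e
    have : max (∑ a : ZMod p, Polynomial.C (δ a) * Polynomial.X ^ a.val).natDegree
        (Polynomial.C e).natDegree ≤ p - 1 := by
      simp [h2, h1]
    exact lt_of_le_of_lt this (Nat.sub_lt hp.pos one_pos)
  have hP0 : P = 0 :=
    Polynomial.eq_zero_of_natDegree_lt_card_of_eval_eq_zero P Function.injective_id heval hdeg
  have hcoeff : ∀ k, ((∑ a : ZMod p, Polynomial.C (δ a) * Polynomial.X ^ a.val).coeff k) =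
      (Polynomial.C e).coeff k := by
    intro k
    have := congrArg (fun Q => Polynomial.coeff Q k) hP0
    simpa [hPdef, sub_eq_zero] using this
  have hval : ∀ b : ZMod p, (b.val : ZMod p) = b := fun b => ZMod.natCast_rightInverse b
  constructor
  · have := hcoeff 0
    rw [Polynomial.finset_sum_coeff] at this
    simp only [Polynomial.coeff_C_mul, Polynomial.coeff_X_pow, Polynomial.coeff_C] at this
    rw [Finset.sum_eq_single 0] at this
    · simpa using this
    · intro b _ hb
      have hne : (0:ℕ) ≠ b.val := fun hv => hb ((ZMod.val_eq_zero b).mp hv.symm)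
      simp [hne]
    · simp
  · have := hcoeff 1
    rw [Polynomial.finset_sum_coeff] at this
    simp only [Polynomial.coeff_C_mul, Polynomial.coeff_X_pow, Polynomial.coeff_C] at this
    rw [Finset.sum_eq_single 1] at this
    · simpa [ZMod.val_one] using this
    · intro b _ hb
      have hne : (1:ℕ) ≠ b.val := by
        intro hv
        apply hb
        rw [← hval b, ← hv]
        simp
      simp [hne]
    · simp

/-- Let `p` be an odd prime and let `S_ξ, S_{ξ'} ∈ Q = T_{(p^m)}` be diagonal with `S_ξ^p`
and `S_{ξ'}^p` scalar `p`-th-root-of-unity multiples of the identity (so that their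
expansion coefficients satisfy `ϑ_{j,a} = 0` for `j ≥ 2`, `a ≠ 0`).  Then
`φ₁(S_ξ S_{ξ'}) = φ₁(S_ξ) φ₁(S_{ξ'})` where `φ₁ = S_{R(·)}`. -/
theorem stmt_13 (p : ℕ) [NeZero p] (hp : Nat.Prime p) (hodd : Odd p)
    (ϑ1 ϑ1' ϑ1'' : ZMod p → ZMod p) (ϑ20 ϑ20' ϑ20'' : ZMod p)
    (hprod : ∀ q : ZMod p, xiOf p ϑ1 ϑ20 q * xiOf p ϑ1' ϑ20' q = xiOf p ϑ1'' ϑ20'' q) :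
    Matrix.diagonal (Rof p ϑ1'' ϑ20'') =
      Matrix.diagonal (Rof p ϑ1 ϑ20) * Matrix.diagonal (Rof p ϑ1' ϑ20') := by
  have hpne : (p:ℤ) ≠ 0 := Int.natCast_ne_zero.mpr (NeZero.ne p)
  -- Step 1: the integer congruence mod p² coming from hprod
  have key : ∀ q : ZMod p, ((p:ℤ)^2) ∣
      ((p * Sint p ϑ1 q + ((ϑ20.val : ℤ))) + (p * Sint p ϑ1' q + ((ϑ20'.val : ℤ)))) -
        (p * Sint p ϑ1'' q + ((ϑ20''.val : ℤ))) := by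
    intro q
    have h := hprod q
    rw [xiOf_eq, xiOf_eq, xiOf_eq, ← Complex.exp_add, ← mul_add, ← Int.cast_add] at h
    exact (exp_eq_exp_int p _ _).mp h
  -- Step 2: p divides θ20 + θ20' - θ20''
  have hc : (p:ℤ) ∣ ((ϑ20.val : ℤ) + (ϑ20'.val : ℤ) - (ϑ20''.val : ℤ)) := by
    have h := key 0
    have hpp : (p:ℤ) ∣ (p:ℤ)^2 := dvd_pow_self _ two_ne_zero
    obtain ⟨k, hk⟩ := hpp.trans h |> id
    exact ⟨k - Sint p ϑ1 0 - Sint p ϑ1' 0 + Sint p ϑ1'' 0, by linarith⟩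
  obtain ⟨d, hd⟩ := hc
  -- Step 3: p divides S + S' - S'' + d for all q
  have hmod : ∀ q : ZMod p, (p:ℤ) ∣ (Sint p ϑ1 q + Sint p ϑ1' q - Sint p ϑ1'' q + d) := by
    intro q
    obtain ⟨k, hk⟩ := key q
    refine ⟨k, ?_⟩
    have h2 : (p:ℤ) * (Sint p ϑ1 q + Sint p ϑ1' q - Sint p ϑ1'' q + d) = (p:ℤ) * ((p:ℤ) * k) := by
      have : (p:ℤ)^2 * k = (p:ℤ) * ((p:ℤ) * k) := by ring
      rw [← this, ← hk]
      linarith [hd]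
    exact mul_left_cancel₀ hpne h2
  -- Step 4: the identity in ZMod p, as a polynomial function
  have hz : ∀ q : ZMod p,
      ∑ a : ZMod p, (ϑ1 a + ϑ1' a - ϑ1'' a) * q ^ a.val = -(d : ZMod p) := by
    intro q
    have h0 : ((Sint p ϑ1 q + Sint p ϑ1' q - Sint p ϑ1'' q + d : ℤ) : ZMod p) = 0 :=
      (ZMod.intCast_zmod_eq_zero_iff_dvd _ _).mpr (hmod q)
    have hS : ∀ (f : ZMod p → ZMod p),
        ((Sint p f q : ℤ) : ZMod p) = ∑ a : ZMod p, f a * q ^ a.val := by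
      intro f
      rw [Sint]
      push_cast [ZMod.natCast_val, ZMod.cast_id]
      rfl
    push_cast [hS] at h0
    simp_rw [sub_mul, add_mul]
    rw [Finset.sum_sub_distrib, Finset.sum_add_distrib]
    linear_combination h0
  -- Step 5: extract coefficients 0 and 1
  obtain ⟨h0', h1'⟩ := coeffs_eq p hp (fun a => ϑ1 a + ϑ1' a - ϑ1'' a) (-(d : ZMod p)) hz
  -- Step 6: pointwise identity for Rof
  have hpoint : ∀ q : ZMod p, Rof p ϑ1'' ϑ20'' q = Rof p ϑ1 ϑ20 q * Rof p ϑ1' ϑ20' q := by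
    intro q
    rw [Rof_eq, Rof_eq, Rof_eq, ← Complex.exp_add, ← mul_add, ← Int.cast_add]
    rw [exp_eq_exp_int]
    have hdvd : (p:ℤ) ∣ (((ϑ1'' 0).val : ℤ) + ((ϑ1'' 1).val : ℤ) * (q.val : ℤ)
        - (((ϑ1 0).val : ℤ) + ((ϑ1 1).val : ℤ) * (q.val : ℤ))
        - (((ϑ1' 0).val : ℤ) + ((ϑ1' 1).val : ℤ) * (q.val : ℤ)) - d) := by
      rw [← ZMod.intCast_zmod_eq_zero_iff_dvd]
      push_cast [ZMod.natCast_val, ZMod.cast_id]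
      have e0 : ϑ1 0 + ϑ1' 0 - ϑ1'' 0 = -(d : ZMod p) := h0'
      have e1 : ϑ1 1 + ϑ1' 1 - ϑ1'' 1 = 0 := h1'
      linear_combination -e0 - (q : ZMod p) * e1
    obtain ⟨k, hk⟩ := hdvd
    refine ⟨k, ?_⟩
    simp only [Rint]
    have : ((ϑ20.val : ℤ) + (ϑ20'.val : ℤ) - (ϑ20''.val : ℤ)) = (p:ℤ) * d := hd
    nlinarith [hk, this]
  rw [Matrix.diagonal_mul_diagonal]
  exact congrArg Matrix.diagonal (funext hpoint)
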